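/- arXiv:2106.02915 — 3 statements merged into one kernel-verified Lean document; each statement's English description precedes it below -/
import Mathlib

section
/- Let σ_1 = (1, 3, 5, …) and σ_2 = (2, 4, 6, …) enumerate the odd and even elements of {1,…,m−1}, respectively, and let 𝕄_{σ_1} and 𝕄_{σ_2} denote the corresponding products 𝕄_1 𝕄_3 𝕄_5 ⋯ and 𝕄_2 𝕄_4 ⋯ of Fiedler matrices of S. Then the PGF pencil 𝕂_o(λ) := λ 𝕄_{σ_1}^{-1} 𝕄_m − 𝕄_0 𝕄_{σ_2} of G is block tridiagonal. -/
open Matrix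

noncomputable section

/-- The matrix polynomial `P(λ) = A_0 + λ A_1 + ⋯ + λ^m A_m` evaluated at `lam`. -/
def PEval (m n : ℕ) (A : Fin (m + 1) → Matrix (Fin n) (Fin n) ℂ) (lam : ℂ) :
    Matrix (Fin n) (Fin n) ℂ :=
  ∑ j : Fin (m + 1), lam ^ (j : ℕ) • A j

/-- `P` is regular: `det P(λ)` is not identically zero. -/
def Regular (m n : ℕ) (A : Fin (m + 1) → Matrix (Fin n) (Fin n) ℂ) : Prop :=
  ∃ lam : ℂ, (PEval m n A lam).det ≠ 0

open Fin.NatCast in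
/-- The Fiedler matrix `M_i` of `P`, an `nm × nm` matrix indexed blockwise by `Fin m × Fin n`
(block row `0` is the top block row). -/
def FM (m n : ℕ) (A : Fin (m + 1) → Matrix (Fin n) (Fin n) ℂ) (i : ℕ) :
    Matrix (Fin m × Fin n) (Fin m × Fin n) ℂ :=
  Matrix.of fun p q =>
    (if i = 0 then
      if p.1 = q.1 then
        (if (p.1 : ℕ) = m - 1 then -A 0 else (1 : Matrix (Fin n) (Fin n) ℂ)) else 0
    else if i = m then
      if p.1 = q.1 then (if (p.1 : ℕ) = 0 then A (m : Fin (m + 1)) else 1) else 0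
    else
      if (p.1 : ℕ) = m - i - 1 ∧ (q.1 : ℕ) = m - i - 1 then -A (i : Fin (m + 1))
      else if (p.1 : ℕ) = m - i - 1 ∧ (q.1 : ℕ) = m - i then 1
      else if (p.1 : ℕ) = m - i ∧ (q.1 : ℕ) = m - i - 1 then 1
      else if (p.1 : ℕ) = m - i ∧ (q.1 : ℕ) = m - i then 0
      else if p.1 = q.1 then 1 else 0) p.2 q.2

/-- `e_j ⊗ B` (with `j` 1-indexed): the `nm × r` block column matrix with `B` in block row `j`. -/
def eB (m n r : ℕ) (j : ℕ) (B : Matrix (Fin n) (Fin r) ℂ) :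
    Matrix (Fin m × Fin n) (Fin r) ℂ :=
  Matrix.of fun p q => if (p.1 : ℕ) + 1 = j then B p.2 q else 0

/-- `e_j^T ⊗ C` (with `j` 1-indexed): the `r × nm` block row matrix with `C` in block column `j`. -/
def eC (m n r : ℕ) (j : ℕ) (C : Matrix (Fin r) (Fin n) ℂ) :
    Matrix (Fin r) (Fin m × Fin n) ℂ :=
  Matrix.of fun q p => if (p.1 : ℕ) + 1 = j then C q p.2 else 0

/-- `M_σ = M_{σ⁻¹(1)} M_{σ⁻¹(2)} ⋯ M_{σ⁻¹(m)}` (here positions are 0-indexed: `σ i` is the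
0-indexed position of the factor `M_i`). -/
def Mperm (m n : ℕ) (A : Fin (m + 1) → Matrix (Fin n) (Fin n) ℂ) (σ : Equiv.Perm (Fin m)) :
    Matrix (Fin m × Fin n) (Fin m × Fin n) ℂ :=
  (List.ofFn fun j : Fin m => FM m n A ((σ.symm j : Fin m) : ℕ)).prod

/-- The Fiedler pencil `L_σ(λ) = λ M_m − M_σ` of `P` evaluated at `lam`. -/
def LP (m n : ℕ) (A : Fin (m + 1) → Matrix (Fin n) (Fin n) ℂ) (σ : Equiv.Perm (Fin m))
    (lam : ℂ) : Matrix (Fin m × Fin n) (Fin m × Fin n) ℂ :=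
  lam • FM m n A m - Mperm m n A σ

/-- `σ` has a consecution at `d` (i.e. `σ(d) < σ(d+1)`). -/
def ConsAt (m : ℕ) (σ : Equiv.Perm (Fin m)) (d : ℕ) : Prop :=
  ∃ h : d + 1 < m, (σ ⟨d, Nat.lt_of_succ_lt h⟩ : ℕ) < (σ ⟨d + 1, h⟩ : ℕ)

/-- `σ` has an inversion at `d` (i.e. `σ(d) > σ(d+1)`). -/
def InvAt (m : ℕ) (σ : Equiv.Perm (Fin m)) (d : ℕ) : Prop :=
  ∃ h : d + 1 < m, (σ ⟨d + 1, h⟩ : ℕ) < (σ ⟨d, Nat.lt_of_succ_lt h⟩ : ℕ)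

/-- `c1` is the number of initial consecutive consecutions of `σ` (the first entry of CISS(σ)). -/
def IsC1 (m : ℕ) (σ : Equiv.Perm (Fin m)) (c1 : ℕ) : Prop :=
  (∀ d < c1, ConsAt m σ d) ∧ ¬ ConsAt m σ c1

/-- `i1` is the number of consecutive inversions of `σ` at `c1, …, c1 + i1 − 1`
(the second entry of CISS(σ)). -/
def IsI1 (m : ℕ) (σ : Equiv.Perm (Fin m)) (c1 i1 : ℕ) : Prop :=
  (∀ d, c1 ≤ d → d < c1 + i1 → InvAt m σ d) ∧ ¬ InvAt m σ (c1 + i1)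

/-- The system matrix `S(λ) = [[−P(λ), B], [C, D]]` evaluated at `lam`. -/
def SMat (m n r : ℕ) (A : Fin (m + 1) → Matrix (Fin n) (Fin n) ℂ)
    (B : Matrix (Fin n) (Fin r) ℂ) (C : Matrix (Fin r) (Fin n) ℂ) (D : Matrix (Fin r) (Fin r) ℂ)
    (lam : ℂ) : Matrix (Fin n ⊕ Fin r) (Fin n ⊕ Fin r) ℂ :=
  Matrix.fromBlocks (-(PEval m n A lam)) B C D

/-- The Fiedler pencil `𝕊_σ(λ)` of the system matrix, evaluated at `lam`:
`[[−L_σ(λ), e_m ⊗ B], [e_{m−c1}^T ⊗ C, D]]` if `c1 > 0`, and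
`[[−L_σ(λ), e_{m−i1} ⊗ B], [e_m^T ⊗ C, D]]` if `c1 = 0`. -/
def SP (m n r : ℕ) (A : Fin (m + 1) → Matrix (Fin n) (Fin n) ℂ)
    (B : Matrix (Fin n) (Fin r) ℂ) (C : Matrix (Fin r) (Fin n) ℂ) (D : Matrix (Fin r) (Fin r) ℂ)
    (σ : Equiv.Perm (Fin m)) (c1 i1 : ℕ) (lam : ℂ) :
    Matrix ((Fin m × Fin n) ⊕ Fin r) ((Fin m × Fin n) ⊕ Fin r) ℂ :=
  if 0 < c1 then
    Matrix.fromBlocks (-(LP m n A σ lam)) (eB m n r m B) (eC m n r (m - c1) C) D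
  else
    Matrix.fromBlocks (-(LP m n A σ lam)) (eB m n r (m - i1) B) (eC m n r m C) D

/-- The Fiedler matrices `𝕄_i` of the system matrix `S(λ)`. -/
def SFM (m n r : ℕ) (A : Fin (m + 1) → Matrix (Fin n) (Fin n) ℂ)
    (B : Matrix (Fin n) (Fin r) ℂ) (C : Matrix (Fin r) (Fin n) ℂ) (D : Matrix (Fin r) (Fin r) ℂ)
    (i : ℕ) : Matrix ((Fin m × Fin n) ⊕ Fin r) ((Fin m × Fin n) ⊕ Fin r) ℂ :=
  if i = 0 then Matrix.fromBlocks (FM m n A 0) (-(eB m n r m B)) (-(eC m n r m C)) (-D)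
  else if i = m then Matrix.fromBlocks (FM m n A m) 0 0 0
  else Matrix.fromBlocks (FM m n A i) 0 0 1

/-- `w = (w0, w1)` is a proper permutation of `{0, 1, …, m}`. -/
def ProperPerm (m : ℕ) (w0 w1 : List ℕ) : Prop :=
  List.Perm (w0 ++ w1) (List.range (m + 1)) ∧ 0 ∈ w0 ∧ m ∈ w1

/-- `M̂_{w0}`: the product of the Fiedler matrices of `P` in the order listed in `w0`. -/
def hatM0 (m n : ℕ) (A : Fin (m + 1) → Matrix (Fin n) (Fin n) ℂ) (w0 : List ℕ) :
    Matrix (Fin m × Fin n) (Fin m × Fin n) ℂ :=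
  (w0.map (FM m n A)).prod

/-- `M̂_{w1} = M_{i1}⁻¹ ⋯ M_{ip}⁻¹ M_m M_{j1}⁻¹ ⋯ M_{jq}⁻¹` for `w1 = (i1,…,ip,m,j1,…,jq)`. -/
def hatM1 (m n : ℕ) (A : Fin (m + 1) → Matrix (Fin n) (Fin n) ℂ) (w1 : List ℕ) :
    Matrix (Fin m × Fin n) (Fin m × Fin n) ℂ :=
  (w1.map (fun i => if i = m then FM m n A m else (FM m n A i)⁻¹)).prod

/-- The PGF pencil `K_w(λ) = λ M̂_{w1} − M̂_{w0}` of `P`, evaluated at `lam`. -/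
def KP (m n : ℕ) (A : Fin (m + 1) → Matrix (Fin n) (Fin n) ℂ) (w0 w1 : List ℕ) (lam : ℂ) :
    Matrix (Fin m × Fin n) (Fin m × Fin n) ℂ :=
  lam • hatM1 m n A w1 - hatM0 m n A w0

/-- `𝕄̂_{w0}` for the system Fiedler matrices. -/
def hatS0 (m n r : ℕ) (A : Fin (m + 1) → Matrix (Fin n) (Fin n) ℂ)
    (B : Matrix (Fin n) (Fin r) ℂ) (C : Matrix (Fin r) (Fin n) ℂ) (D : Matrix (Fin r) (Fin r) ℂ)
    (w0 : List ℕ) : Matrix ((Fin m × Fin n) ⊕ Fin r) ((Fin m × Fin n) ⊕ Fin r) ℂ :=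
  (w0.map (SFM m n r A B C D)).prod

/-- `𝕄̂_{w1}` for the system Fiedler matrices. -/
def hatS1 (m n r : ℕ) (A : Fin (m + 1) → Matrix (Fin n) (Fin n) ℂ)
    (B : Matrix (Fin n) (Fin r) ℂ) (C : Matrix (Fin r) (Fin n) ℂ) (D : Matrix (Fin r) (Fin r) ℂ)
    (w1 : List ℕ) : Matrix ((Fin m × Fin n) ⊕ Fin r) ((Fin m × Fin n) ⊕ Fin r) ℂ :=
  (w1.map (fun i => if i = m then SFM m n r A B C D m else (SFM m n r A B C D i)⁻¹)).prod

/-- The PGF pencil `𝕂_w(λ) = λ 𝕄̂_{w1} − 𝕄̂_{w0}` of `G`, evaluated at `lam`. -/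
def SKP (m n r : ℕ) (A : Fin (m + 1) → Matrix (Fin n) (Fin n) ℂ)
    (B : Matrix (Fin n) (Fin r) ℂ) (C : Matrix (Fin r) (Fin n) ℂ) (D : Matrix (Fin r) (Fin r) ℂ)
    (w0 w1 : List ℕ) (lam : ℂ) :
    Matrix ((Fin m × Fin n) ⊕ Fin r) ((Fin m × Fin n) ⊕ Fin r) ℂ :=
  lam • hatS1 m n r A B C D w1 - hatS0 m n r A B C D w0

/-- The index tuple `w` has a consecution at `d`. -/
def LCons (w : List ℕ) (d : ℕ) : Prop :=
  d ∈ w ∧ d + 1 ∈ w ∧ w.idxOf d < w.idxOf (d + 1)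

/-- The index tuple `w` has an inversion at `d`. -/
def LInv (w : List ℕ) (d : ℕ) : Prop :=
  d ∈ w ∧ d + 1 ∈ w ∧ w.idxOf (d + 1) < w.idxOf d

/-- `CIP(w) = (c0, i0)`. -/
def IsCIP (w : List ℕ) (c0 i0 : ℕ) : Prop :=
  ((∀ d < c0, LCons w d) ∧ ¬ LCons w c0) ∧ ((∀ d < i0, LInv w d) ∧ ¬ LInv w i0)

/-- Block index of an index of an `(nm+r) × (nm+r)` matrix: the first `m` (diagonal) blocks
have size `n`, the last one size `r`. -/
def sIdx (m n r : ℕ) : (Fin m × Fin n) ⊕ Fin r → ℕ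
  | Sum.inl p => p.1
  | Sum.inr _ => m

/-- An `(nm+r) × (nm+r)` matrix has block bandwidth `k` (e.g. `k = 1`: block tridiagonal,
`k = 2`: block pentadiagonal). -/
def BlockBandS (m n r : ℕ) (k : ℕ)
    (M : Matrix ((Fin m × Fin n) ⊕ Fin r) ((Fin m × Fin n) ⊕ Fin r) ℂ) : Prop :=
  ∀ x y, (sIdx m n r x + k < sIdx m n r y ∨ sIdx m n r y + k < sIdx m n r x) → M x y = 0

/-- An `nm × nm` matrix has block bandwidth `k`. -/
def BlockBandP (m n : ℕ) (k : ℕ) (M : Matrix (Fin m × Fin n) (Fin m × Fin n) ℂ) : Prop :=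
  ∀ x y : Fin m × Fin n, ((x.1 : ℕ) + k < (y.1 : ℕ) ∨ (y.1 : ℕ) + k < (x.1 : ℕ)) → M x y = 0

/-- The degree-`k` Horner shift `P_k(λ) = A_{m−k} + λ A_{m−k+1} + ⋯ + λ^k A_m`. -/
def Horner (m n : ℕ) (A : Fin (m + 1) → Matrix (Fin n) (Fin n) ℂ) (k : Fin (m + 1)) (lam : ℂ) :
    Matrix (Fin n) (Fin n) ℂ :=
  ∑ j : Fin ((k : ℕ) + 1),
    lam ^ (j : ℕ) • A ⟨m - (k : ℕ) + (j : ℕ), by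
      have h1 := j.isLt; have h2 := k.isLt; omega⟩

open Fin.NatCast in
/-- `N_1`: the zero-degree coefficient of the first companion pencil of `P`. -/
def N1 (m n : ℕ) (A : Fin (m + 1) → Matrix (Fin n) (Fin n) ℂ) :
    Matrix (Fin m × Fin n) (Fin m × Fin n) ℂ :=
  Matrix.of fun p q =>
    (if (p.1 : ℕ) = 0 then -A ((m - 1 - (q.1 : ℕ) : ℕ) : Fin (m + 1))
     else if (p.1 : ℕ) = (q.1 : ℕ) + 1 then (1 : Matrix (Fin n) (Fin n) ℂ)
     else 0) p.2 q.2

open Fin.NatCast in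
/-- `N_2`: the zero-degree coefficient of the second companion pencil of `P`. -/
def N2 (m n : ℕ) (A : Fin (m + 1) → Matrix (Fin n) (Fin n) ℂ) :
    Matrix (Fin m × Fin n) (Fin m × Fin n) ℂ :=
  Matrix.of fun p q =>
    (if (q.1 : ℕ) = 0 then -A ((m - 1 - (p.1 : ℕ) : ℕ) : Fin (m + 1))
     else if (q.1 : ℕ) = (p.1 : ℕ) + 1 then (1 : Matrix (Fin n) (Fin n) ℂ)
     else 0) p.2 q.2

/-- The first companion form `C_1(λ) = [[−L_1(λ), e_1 ⊗ B], [e_m^T ⊗ C, D]]` of `S`. -/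
def C1P (m n r : ℕ) (A : Fin (m + 1) → Matrix (Fin n) (Fin n) ℂ)
    (B : Matrix (Fin n) (Fin r) ℂ) (C : Matrix (Fin r) (Fin n) ℂ) (D : Matrix (Fin r) (Fin r) ℂ)
    (lam : ℂ) : Matrix ((Fin m × Fin n) ⊕ Fin r) ((Fin m × Fin n) ⊕ Fin r) ℂ :=
  Matrix.fromBlocks (-(lam • FM m n A m - N1 m n A)) (eB m n r 1 B) (eC m n r m C) D

/-- The second companion form `C_2(λ) = [[−L_2(λ), e_m ⊗ B], [e_1^T ⊗ C, D]]` of `S`. -/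
def C2P (m n r : ℕ) (A : Fin (m + 1) → Matrix (Fin n) (Fin n) ℂ)
    (B : Matrix (Fin n) (Fin r) ℂ) (C : Matrix (Fin r) (Fin n) ℂ) (D : Matrix (Fin r) (Fin r) ℂ)
    (lam : ℂ) : Matrix ((Fin m × Fin n) ⊕ Fin r) ((Fin m × Fin n) ⊕ Fin r) ℂ :=
  Matrix.fromBlocks (-(lam • FM m n A m - N2 m n A)) (eB m n r m B) (eC m n r 1 C) D

/-!
For `1 ≤ i ≤ m - 1`, `𝕄_i` only couples the adjacent block rows `m - i - 1` and `m - i`, so the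
factors of one parity act on disjoint pairs of adjacent block rows: their product is block
diagonal for a partition of the block indices into intervals of length at most two, and hence so
is its inverse. `𝕄_m` is block diagonal and `𝕄_0` only couples the last two block rows, so both
coefficients of the pencil are products of matrices whose supports compose into the block
tridiagonal pattern.
-/

namespace Matrix

variable {ι κ ν α : Type*}

def SupportedOn [Zero α] (R : ι → κ → Prop) (M : Matrix ι κ α) : Prop :=
  ∀ i j, ¬ R i j → M i j = 0

namespace SupportedOn

variable {R R' : ι → κ → Prop} {M N : Matrix ι κ α}

theorem mono [Zero α] (hM : SupportedOn R M) (h : ∀ i j, R i j → R' i j) :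
    SupportedOn R' M :=
  fun i j hij => hM i j fun hR => hij (h i j hR)

theorem sub [AddGroup α] (hM : SupportedOn R M) (hN : SupportedOn R N) :
    SupportedOn R (M - N) :=
  fun i j hij => by rw [sub_apply, hM i j hij, hN i j hij, sub_zero]

theorem smul {β : Type*} [Zero α] [SMulZeroClass β α] (c : β) (hM : SupportedOn R M) :
    SupportedOn R (c • M) :=
  fun i j hij => by rw [smul_apply, hM i j hij, smul_zero]

theorem mul [Fintype κ] [NonUnitalNonAssocSemiring α] {S : κ → ν → Prop}
    {N : Matrix κ ν α} (hM : SupportedOn R M) (hN : SupportedOn S N) :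
    SupportedOn (Relation.Comp R S) (M * N) := by
  intro i j hij
  refine Finset.sum_eq_zero fun k _ => show M i k * N k j = 0 from ?_
  by_cases hik : R i k
  · rw [hN k j fun hkj => hij ⟨k, hik, hkj⟩, mul_zero]
  · rw [hM i k hik, zero_mul]

theorem list_prod [Fintype ι] [DecidableEq ι] [Semiring α] {β : Type*}
    {f : ι → β} {l : List (Matrix ι ι α)} (hl : ∀ M ∈ l, SupportedOn (fun i j => f i = f j) M) :
    SupportedOn (fun i j => f i = f j) l.prod :=
  List.prod_induction _
    (fun _ _ hM hN => (hM.mul hN).mono fun _ _ ⟨_, h₁, h₂⟩ => h₁.trans h₂)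
    (fun _ _ hij => one_apply_ne fun h => hij (h ▸ rfl)) hl

theorem inv [Fintype ι] [DecidableEq ι] [CommRing α] {β : Type*} [LinearOrder β]
    {f : ι → β} {M : Matrix ι ι α} (hM : SupportedOn (fun i j => f i = f j) M) :
    SupportedOn (fun i j => f i = f j) M⁻¹ := by
  by_cases hdet : IsUnit M.det
  · have := M.invertibleOfIsUnitDet hdet
    have hlo : BlockTriangular M f := fun i j h => hM i j h.ne'
    have hup : BlockTriangular M (OrderDual.toDual ∘ f) := fun i j h => hM i j h.ne'
    intro i j hij
    rcases lt_or_gt_of_ne hij with h | h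
    · exact blockTriangular_inv_of_blockTriangular hup h
    · exact blockTriangular_inv_of_blockTriangular hlo h
  · rw [nonsing_inv_apply_not_isUnit M hdet]
    exact fun _ _ _ => rfl

end SupportedOn

end Matrix

section FiedlerSupport

variable {m n r : ℕ} (A : Fin (m + 1) → Matrix (Fin n) (Fin n) ℂ)
  (B : Matrix (Fin n) (Fin r) ℂ) (C : Matrix (Fin r) (Fin n) ℂ) (D : Matrix (Fin r) (Fin r) ℂ)

theorem sIdx_le (x : (Fin m × Fin n) ⊕ Fin r) : sIdx m n r x ≤ m := by
  rcases x with p | _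
  · exact p.1.isLt.le
  · exact le_rfl

theorem blockBandS_iff_supportedOn (k : ℕ)
    (M : Matrix ((Fin m × Fin n) ⊕ Fin r) ((Fin m × Fin n) ⊕ Fin r) ℂ) :
    BlockBandS m n r k M ↔
      SupportedOn (fun x y => sIdx m n r x ≤ sIdx m n r y + k ∧ sIdx m n r y ≤ sIdx m n r x + k) M :=
  forall₂_congr fun _ _ => imp_congr_left (by omega)

/-- `(k + m + i + 1) / 2` takes the same value exactly on the block rows `m - i - 1` and `m - i`
coupled by `𝕄_i`; up to a shift it depends only on the parity of `i`. -/
theorem SFM_supportedOn_pair {i : ℕ} (hi : 1 ≤ i) (him : i < m) :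
    SupportedOn (fun x y => (sIdx m n r x + m + i + 1) / 2 = (sIdx m n r y + m + i + 1) / 2)
      (SFM m n r A B C D i) := by
  rw [SFM, if_neg (by omega), if_neg (by omega)]
  rintro (⟨b, k⟩ | s) (⟨c, l⟩ | t) h <;> simp only [sIdx] at h
  · simp only [fromBlocks_apply₁₁, FM, of_apply, if_neg (show i ≠ 0 by omega),
      if_neg (show i ≠ m by omega)]
    split_ifs <;> first | omega | rfl
  · rfl
  · rfl
  · exact (h trivial).elim

theorem SFM_last_supportedOn (hm : m ≠ 0) :
    SupportedOn (fun x y => sIdx m n r x = sIdx m n r y) (SFM m n r A B C D m) := by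
  rw [SFM, if_neg hm, if_pos rfl]
  rintro (⟨b, k⟩ | s) (⟨c, l⟩ | t) h <;> simp only [sIdx] at h
  · simp only [fromBlocks_apply₁₁, FM, of_apply, if_neg hm,
      if_neg (show b ≠ c from fun e => h (e ▸ rfl))]
    rfl
  all_goals rfl

theorem SFM_zero_supportedOn :
    SupportedOn (fun x y => min (sIdx m n r x) (m - 1) = min (sIdx m n r y) (m - 1))
      (SFM m n r A B C D 0) := by
  rw [SFM, if_pos rfl]
  rintro (⟨b, k⟩ | s) (⟨c, l⟩ | t) h <;> simp only [sIdx] at h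
  · simp only [fromBlocks_apply₁₁, FM, of_apply, if_neg (show b ≠ c from fun e => h (e ▸ rfl))]
    rfl
  · simp only [fromBlocks_apply₁₂, Matrix.neg_apply, eB, of_apply]
    rw [if_neg (by omega), neg_zero]
  · simp only [fromBlocks_apply₂₁, Matrix.neg_apply, eC, of_apply]
    rw [if_neg (by omega), neg_zero]
  · exact (h trivial).elim

theorem prod_SFM_supportedOn (ε : ℕ) (L : List ℕ)
    (hL : ∀ i ∈ L, 1 ≤ i ∧ i < m ∧ i % 2 = ε % 2) :
    SupportedOn (fun x y => (sIdx m n r x + m + ε + 1) / 2 = (sIdx m n r y + m + ε + 1) / 2)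
      (L.map (SFM m n r A B C D)).prod := by
  refine SupportedOn.list_prod fun M hM => ?_
  obtain ⟨i, hiL, rfl⟩ := List.mem_map.1 hM
  obtain ⟨hi, him, hpar⟩ := hL i hiL
  exact (SFM_supportedOn_pair A B C D hi him).mono fun x y h => by omega

end FiedlerSupport

theorem stmt8_general (m n r : ℕ) (hm : 2 ≤ m)
    (A : Fin (m + 1) → Matrix (Fin n) (Fin n) ℂ)
    (B : Matrix (Fin n) (Fin r) ℂ) (C : Matrix (Fin r) (Fin n) ℂ)
    (D : Matrix (Fin r) (Fin r) ℂ) :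
    ∀ lam : ℂ,
      BlockBandS m n r 1
        (lam • ((((List.range m).filter fun i => i % 2 == 1).map
              (SFM m n r A B C D)).prod⁻¹ * SFM m n r A B C D m) -
          SFM m n r A B C D 0 *
            (((List.range m).filter fun i => (i % 2 == 0) && (i != 0)).map
              (SFM m n r A B C D)).prod) := by
  intro lam
  have hodd := prod_SFM_supportedOn A B C D 1 ((List.range m).filter fun i => i % 2 == 1)
    (fun i hi => by simp only [List.mem_filter, List.mem_range, beq_iff_eq] at hi; omega)
  have heven := prod_SFM_supportedOn A B C D 0
    ((List.range m).filter fun i => (i % 2 == 0) && (i != 0))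
    (fun i hi => by
      simp only [List.mem_filter, List.mem_range, Bool.and_eq_true, beq_iff_eq, bne_iff_ne] at hi
      omega)
  rw [blockBandS_iff_supportedOn]
  refine SupportedOn.sub (SupportedOn.smul lam ?_) ?_
  · refine (hodd.inv.mul (SFM_last_supportedOn A B C D (by omega))).mono ?_
    rintro x z ⟨y, hxy, hyz⟩
    omega
  · refine ((SFM_zero_supportedOn A B C D).mul heven).mono ?_
    rintro x z ⟨y, hxy, hyz⟩
    have := sIdx_le x
    have := sIdx_le y
    omega

/-- with `σ₁ = (1, 3, 5, …)` the odd and `σ₂ = (2, 4, 6, …)` the even elements of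
`{1, …, m−1}`, the PGF pencil `𝕂_o(λ) = λ 𝕄_{σ₁}⁻¹ 𝕄_m − 𝕄_0 𝕄_{σ₂}` of `G` is
block tridiagonal. -/
theorem stmt8 (m n r : ℕ) (hm : 2 ≤ m) (hn : 1 ≤ n) (hr : 1 ≤ r)
    (A : Fin (m + 1) → Matrix (Fin n) (Fin n) ℂ) (hreg : Regular m n A)
    (B : Matrix (Fin n) (Fin r) ℂ) (C : Matrix (Fin r) (Fin n) ℂ)
    (D : Matrix (Fin r) (Fin r) ℂ) :
    ∀ lam : ℂ,
      BlockBandS m n r 1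
        (lam • ((((List.range m).filter fun i => i % 2 == 1).map
              (SFM m n r A B C D)).prod⁻¹ * SFM m n r A B C D m) -
          SFM m n r A B C D 0 *
            (((List.range m).filter fun i => (i % 2 == 0) && (i != 0)).map
              (SFM m n r A B C D)).prod) :=
  stmt8_general m n r hm A B C D

end
end

section
/- Let λ ∈ ℂ be such that P(λ) is invertible. Then the linear map g : ℂ^r → ℂ^{n+r}, g(y) = ((C P(λ)^{-1})^T y, y), restricts to a linear isomorphism from the left null space N_l(G(λ)) = { y ∈ ℂ^r : y^T G(λ) = 0 } onto N_l(S(λ)) = { z ∈ ℂ^{n+r} : z^T S(λ) = 0 }. -/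
/-!
Write a left null vector of `S(λ)` as `z = (u, y)`. The equation `zᵀ S(λ) = 0` splits into
`uᵀ P(λ) = yᵀ C` and `uᵀ B + yᵀ D = 0`. Since `P(λ)` is invertible, the first equation determines
`u = (C P(λ)⁻¹)ᵀ y`, and substituting it into the second gives `yᵀ G(λ) = 0`. Hence `z ↦ y` inverts
`y ↦ ((C P(λ)⁻¹)ᵀ y, y)` between the two left null spaces.
-/

open Matrix

noncomputable section

namespace Matrix

variable {K n r : Type*} [CommRing K]

theorem mem_ker_mulVecLin_transpose_iff [Fintype n] {M : Matrix n r K} {v : n → K} :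
    v ∈ LinearMap.ker Mᵀ.mulVecLin ↔ v ᵥ* M = 0 := by
  rw [LinearMap.mem_ker, mulVecLin_apply, mulVec_transpose]

theorem injective_mulVec_fromRows_one [Fintype r] [DecidableEq r] (M : Matrix n r K) :
    Function.Injective (fromRows M (1 : Matrix r r K)).mulVec := fun x y hxy => by
  simpa only [fromRows_mulVec, one_mulVec, Sum.elim_comp_inr] using congrArg (· ∘ Sum.inr) hxy

theorem sumElim_vecMul_fromBlocks_neg_eq_zero_iff [Fintype n] [DecidableEq n] [Fintype r]
    {P : Matrix n n K} (hP : IsUnit P.det)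
    (B : Matrix n r K) (C : Matrix r n K) (D : Matrix r r K) (u : n → K) (y : r → K) :
    Sum.elim u y ᵥ* fromBlocks (-P) B C D = 0 ↔
      u = y ᵥ* (C * P⁻¹) ∧ y ᵥ* (C * P⁻¹ * B + D) = 0 := by
  have hu : u ᵥ* P = y ᵥ* C ↔ u = y ᵥ* (C * P⁻¹) := by
    constructor
    · intro h
      rw [← vecMul_vecMul, ← h, vecMul_vecMul, mul_nonsing_inv P hP, vecMul_one]
    · rintro rfl
      rw [vecMul_vecMul, Matrix.mul_assoc, nonsing_inv_mul P hP, Matrix.mul_one]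
  rw [vecMul_fromBlocks, Sum.elim_comp_inl, Sum.elim_comp_inr, ← Sum.elim_zero_zero,
    Sum.elim_eq_iff, vecMul_neg, neg_add_eq_sub, sub_eq_zero, eq_comm, hu, vecMul_add]
  exact and_congr_right fun hu_eq => by rw [hu_eq, vecMul_vecMul]

theorem ker_transpose_fromBlocks_neg_eq_map [Fintype n] [DecidableEq n] [Fintype r]
    [DecidableEq r] {P : Matrix n n K} (hP : IsUnit P.det)
    (B : Matrix n r K) (C : Matrix r n K) (D : Matrix r r K) :
    LinearMap.ker (fromBlocks (-P) B C D)ᵀ.mulVecLin =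
      (LinearMap.ker (C * P⁻¹ * B + D)ᵀ.mulVecLin).map (fromRows (C * P⁻¹)ᵀ 1).mulVecLin := by
  ext z
  obtain ⟨u, y, rfl⟩ : ∃ u y, z = Sum.elim u y := ⟨_, _, (Sum.elim_comp_inl_inr z).symm⟩
  rw [mem_ker_mulVecLin_transpose_iff,
    sumElim_vecMul_fromBlocks_neg_eq_zero_iff hP, Submodule.mem_map]
  simp only [mem_ker_mulVecLin_transpose_iff, mulVecLin_apply, fromRows_mulVec, one_mulVec,
    mulVec_transpose, Sum.elim_eq_iff]
  constructor
  · rintro ⟨hu, hy⟩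
    exact ⟨_, hy, hu.symm, rfl⟩
  · rintro ⟨y, hy, hu, rfl⟩
    exact ⟨hu.symm, hy⟩

end Matrix

theorem stmt12_general (m n r : ℕ)
    (A : Fin (m + 1) → Matrix (Fin n) (Fin n) ℂ)
    (B : Matrix (Fin n) (Fin r) ℂ) (C : Matrix (Fin r) (Fin n) ℂ)
    (D : Matrix (Fin r) (Fin r) ℂ)
    (lam : ℂ) (hP : IsUnit (PEval m n A lam).det) :
    ∃ φ : LinearMap.ker (Matrix.mulVecLin (C * (PEval m n A lam)⁻¹ * B + D)ᵀ) ≃ₗ[ℂ]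
        LinearMap.ker (Matrix.mulVecLin (SMat m n r A B C D lam)ᵀ),
      ∀ y, (φ y : Fin n ⊕ Fin r → ℂ) =
        Sum.elim ((C * (PEval m n A lam)⁻¹)ᵀ.mulVec (y : Fin r → ℂ)) (y : Fin r → ℂ) := by
  refine ⟨(Submodule.equivMapOfInjective _ (injective_mulVec_fromRows_one _) _).trans
    (LinearEquiv.ofEq _ _ (ker_transpose_fromBlocks_neg_eq_map hP B C D).symm), fun y => ?_⟩
  change fromRows _ 1 *ᵥ (y : Fin r → ℂ) = _
  rw [fromRows_mulVec, one_mulVec]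

/-- for `λ` with `P(λ)` invertible, `y ↦ ((C P(λ)⁻¹)ᵀ y, y)` restricts to a linear
isomorphism from the left null space of `G(λ)` onto the left null space of `S(λ)`. -/
theorem stmt12 (m n r : ℕ) (hm : 2 ≤ m) (hn : 1 ≤ n) (hr : 1 ≤ r)
    (A : Fin (m + 1) → Matrix (Fin n) (Fin n) ℂ) (hreg : Regular m n A)
    (B : Matrix (Fin n) (Fin r) ℂ) (C : Matrix (Fin r) (Fin n) ℂ)
    (D : Matrix (Fin r) (Fin r) ℂ)
    (lam : ℂ) (hP : IsUnit (PEval m n A lam).det) :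
    ∃ φ : LinearMap.ker (Matrix.mulVecLin (C * (PEval m n A lam)⁻¹ * B + D)ᵀ) ≃ₗ[ℂ]
        LinearMap.ker (Matrix.mulVecLin (SMat m n r A B C D lam)ᵀ),
      ∀ y, (φ y : Fin n ⊕ Fin r → ℂ) =
        Sum.elim ((C * (PEval m n A lam)⁻¹)ᵀ.mulVec (y : Fin r → ℂ)) (y : Fin r → ℂ) :=
  stmt12_general m n r A B C D lam hP

end
end

section
/- Let λ ∈ ℂ be such that P(λ) is invertible, and let C_2(λ) be the second companion form of S. For x ∈ ℂ^r, set w := P(λ)^{-1} B x ∈ ℂ^n and let v ∈ ℂ^{nm+r} be the block vector v = (w, P_1(λ)w, P_2(λ)w, …, P_{m−1}(λ)w, x), where P_k(λ) is the degree-k Horner shift of P. Then G(λ)x = 0 if and only if C_2(λ)v = 0, and the map x ↦ v is a linear isomorphism from the null space of G(λ) onto the null space of C_2(λ). -/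
open Matrix

noncomputable section

/-!
The first `m - 1` block rows of `C₂(λ) (y, x) = 0` read
`y_{k+1} = λ y_k + A_{m-1-k} y_0` (with `A_m y_0` in place of `y_k` when `k = 0`), which is the
Horner recurrence `P_{k+1} = A_{m-1-k} + λ P_k`; so they force `y_k = P_k(λ) y_0`. The last block
row then reads `P(λ) y_0 = B x`, i.e. `y_0 = P(λ)⁻¹ B x`, and the bottom row `C y_0 + D x = 0` is
`G(λ) x = 0`. Hence `ker C₂(λ)` is the image of `ker G(λ)` under the injective map `x ↦ v`.
-/

section SecondCompanion

variable {m n r : ℕ} (A : Fin (m + 1) → Matrix (Fin n) (Fin n) ℂ) (lam : ℂ)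

theorem horner_zero : Horner m n A 0 lam = A (Fin.last m) := by
  rw [Horner]
  exact Fin.sum_univ_one _ |>.trans (by simp [Fin.last])

theorem horner_succ (k : Fin m) :
    Horner m n A k.succ lam = A k.rev.castSucc + lam • Horner m n A k.castSucc lam := by
  rw [Horner, Fin.sum_univ_succ, Horner, Finset.smul_sum]
  congr 1
  · simp only [Fin.val_succ, Fin.coe_ofNat_eq_mod, Nat.zero_mod, pow_zero, one_smul, add_zero]
    congr 1
  · refine Finset.sum_congr rfl fun j _ => ?_
    rw [smul_smul, ← pow_succ']
    congr 2
    ext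
    simp only [Fin.val_succ, Fin.val_castSucc]
    omega

theorem horner_last : Horner m n A (Fin.last m) lam = PEval m n A lam := by
  simp [Horner, PEval, Fin.last]

def hornerBlocks (w : Fin n → ℂ) : Fin m × Fin n → ℂ :=
  fun p => if (p.1 : ℕ) = 0 then w p.2 else (Horner m n A p.1.castSucc lam *ᵥ w) p.2

variable (B : Matrix (Fin n) (Fin r) ℂ) (C : Matrix (Fin r) (Fin n) ℂ) (D : Matrix (Fin r) (Fin r) ℂ)

def secondCompanionLift : (Fin r → ℂ) →ₗ[ℂ] ((Fin m × Fin n) ⊕ Fin r → ℂ) where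
  toFun x := Sum.elim (hornerBlocks A lam (((PEval m n A lam)⁻¹ * B) *ᵥ x)) x
  map_add' x x' := by
    ext (⟨k, j⟩ | q)
    · simp only [Sum.elim_inl, Pi.add_apply, hornerBlocks, mulVec_add]
      split_ifs <;> rfl
    · rfl
  map_smul' c x := by
    ext (⟨k, j⟩ | q)
    · simp only [Sum.elim_inl, Pi.smul_apply, hornerBlocks, mulVec_smul]
      split_ifs <;> rfl
    · rfl

theorem secondCompanionLift_injective : Function.Injective (secondCompanionLift A lam B) :=
  fun _ _ h => funext fun q => congrFun h (Sum.inr q)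

open Fin.NatCast in
theorem Fin.natCast_sub_one_sub_eq_castSucc_rev (k : Fin m) :
    ((m - 1 - k : ℕ) : Fin (m + 1)) = k.rev.castSucc := by
  ext
  rw [Fin.val_cast_of_lt (by omega)]
  simp only [Fin.val_castSucc, Fin.val_rev]
  omega

theorem eB_mulVec (l : ℕ) (x : Fin r → ℂ) (k : Fin m) (j : Fin n) :
    (eB m n r l B *ᵥ x) (k, j) = if (k : ℕ) + 1 = l then (B *ᵥ x) j else 0 := by
  by_cases h : (k : ℕ) + 1 = l <;> simp [eB, mulVec, dotProduct, h]

variable [NeZero m]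

theorem FM_last_mulVec (y : Fin m × Fin n → ℂ) (k : Fin m) (j : Fin n) :
    (FM m n A m *ᵥ y) (k, j) =
      if (k : ℕ) = 0 then (A (Fin.last m) *ᵥ Function.curry y 0) j else y (k, j) := by
  have hm : m ≠ 0 := NeZero.ne m
  by_cases hk : k = 0
  · subst hk
    simp [FM, hm, mulVec, dotProduct, Fintype.sum_prod_type, Fin.natCast_eq_last,
      Matrix.ite_apply, ite_mul]
  · simp [FM, hm, hk, mulVec, dotProduct, Fintype.sum_prod_type, Matrix.ite_apply, ite_mul,
      Matrix.one_apply]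

theorem N2_mulVec (y : Fin m × Fin n → ℂ) (k : Fin m) (j : Fin n) :
    (N2 m n A *ᵥ y) (k, j) = -(A k.rev.castSucc *ᵥ Function.curry y 0) j +
      if h : (k : ℕ) + 1 < m then y (⟨k + 1, h⟩, j) else 0 := by
  have hblock : ∀ q : Fin m, ∑ i, N2 m n A (k, j) (q, i) * y (q, i) =
      (if q = 0 then -(A k.rev.castSucc *ᵥ Function.curry y 0) j else 0) +
        if (q : ℕ) = k + 1 then y (q, j) else 0 := by
    intro q
    by_cases hq : q = 0
    · subst hq
      simp [N2, Fin.natCast_sub_one_sub_eq_castSucc_rev, mulVec, dotProduct]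
    · by_cases hqk : (q : ℕ) = k + 1 <;> simp [N2, hq, hqk, Matrix.one_apply]
  rw [mulVec, dotProduct, Fintype.sum_prod_type, Finset.sum_congr rfl fun q _ => hblock q,
    Finset.sum_add_distrib, Fintype.sum_ite_eq']
  congr 1
  split_ifs with h
  · rw [Fintype.sum_eq_single ⟨k + 1, h⟩ fun q hq => if_neg fun e => hq (Fin.ext e)]
    simp
  · exact Finset.sum_eq_zero fun q _ => if_neg (by omega)

theorem eC_one_mulVec (y : Fin m × Fin n → ℂ) (q : Fin r) :
    (eC m n r 1 C *ᵥ y) q = (C *ᵥ Function.curry y 0) q := by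
  rw [mulVec, dotProduct, Fintype.sum_prod_type, Fintype.sum_eq_single 0]
  · simp [eC, mulVec, dotProduct]
  · intro k hk
    simp [eC, hk]

theorem C2P_mulVec_inl (y : Fin m × Fin n → ℂ) (x : Fin r → ℂ) (k : Fin m) (j : Fin n) :
    (C2P m n r A B C D lam *ᵥ Sum.elim y x) (Sum.inl (k, j)) =
      (if h : (k : ℕ) + 1 < m then y (⟨k + 1, h⟩, j) else (B *ᵥ x) j) -
        lam * (FM m n A m *ᵥ y) (k, j) - (A k.rev.castSucc *ᵥ Function.curry y 0) j := by
  simp only [C2P, fromBlocks_mulVec, Sum.elim_inl, Sum.elim_comp_inl, Sum.elim_comp_inr,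
    Pi.add_apply, neg_mulVec, sub_mulVec, smul_mulVec, Pi.neg_apply, Pi.sub_apply, Pi.smul_apply,
    smul_eq_mul, N2_mulVec, eB_mulVec]
  split_ifs <;> first | omega | ring

theorem C2P_mulVec_inr (y : Fin m × Fin n → ℂ) (x : Fin r → ℂ) (q : Fin r) :
    (C2P m n r A B C D lam *ᵥ Sum.elim y x) (Sum.inr q) =
      (C *ᵥ Function.curry y 0) q + (D *ᵥ x) q := by
  simp only [C2P, fromBlocks_mulVec, Sum.elim_inr, Sum.elim_comp_inl, Sum.elim_comp_inr,
    Pi.add_apply, eC_one_mulVec]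

theorem curry_hornerBlocks_zero (w : Fin n → ℂ) :
    Function.curry (hornerBlocks A lam w) 0 = w := by
  ext j
  simp [hornerBlocks]

theorem FM_last_mulVec_hornerBlocks (w : Fin n → ℂ) (k : Fin m) (j : Fin n) :
    (FM m n A m *ᵥ hornerBlocks A lam w) (k, j) = (Horner m n A k.castSucc lam *ᵥ w) j := by
  rw [FM_last_mulVec]
  split_ifs with hk
  · obtain rfl : k = 0 := Fin.val_eq_zero_iff.mp hk
    rw [curry_hornerBlocks_zero, Fin.castSucc_zero, horner_zero]
  · simp [hornerBlocks, hk]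

theorem C2P_mulVec_hornerBlocks (w : Fin n → ℂ) (x : Fin r → ℂ) :
    C2P m n r A B C D lam *ᵥ Sum.elim (hornerBlocks A lam w) x =
      Sum.elim (fun p => if (p.1 : ℕ) + 1 = m then (B *ᵥ x - PEval m n A lam *ᵥ w) p.2 else 0)
        (C *ᵥ w + D *ᵥ x) := by
  ext (⟨k, j⟩ | q)
  · rw [C2P_mulVec_inl, FM_last_mulVec_hornerBlocks, curry_hornerBlocks_zero, Sum.elim_inl]
    dsimp only
    split_ifs with hlt hlast hlast
    · omega
    · have hsucc : (⟨k + 1, hlt⟩ : Fin m).castSucc = k.succ := rfl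
      simp [hornerBlocks, hsucc, horner_succ, add_mulVec, smul_mulVec]
    · rw [← horner_last, ← (Fin.ext hlast : k.succ = Fin.last m), horner_succ, add_mulVec, smul_mulVec]
      simp only [Pi.add_apply, Pi.smul_apply, Pi.sub_apply, smul_eq_mul]
      ring
    · omega
  · rw [C2P_mulVec_inr, curry_hornerBlocks_zero]
    rfl

theorem eq_hornerBlocks_of_C2P_mulVec_eq_zero (y : Fin m × Fin n → ℂ) (x : Fin r → ℂ)
    (h : C2P m n r A B C D lam *ᵥ Sum.elim y x = 0) :
    y = hornerBlocks A lam (Function.curry y 0) := by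
  have hrow : ∀ (k : Fin m) (hk : (k : ℕ) + 1 < m) (j : Fin n),
      y (⟨k + 1, hk⟩, j) =
        lam * (FM m n A m *ᵥ y) (k, j) + (A k.rev.castSucc *ᵥ Function.curry y 0) j := by
    intro k hk j
    have hkj := congrFun h (Sum.inl (k, j))
    rw [C2P_mulVec_inl, dif_pos hk, Pi.zero_apply] at hkj
    linear_combination hkj
  have hFM : ∀ (k : ℕ) (hk : k < m) (j : Fin n),
      (FM m n A m *ᵥ y) (⟨k, hk⟩, j) =
        (Horner m n A ⟨k, by omega⟩ lam *ᵥ Function.curry y 0) j := by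
    intro k
    induction k with
    | zero =>
      intro hk j
      rw [FM_last_mulVec, if_pos rfl, Fin.mk_zero, horner_zero]
    | succ k ih =>
      intro hk j
      rw [FM_last_mulVec, if_neg k.add_one_ne_zero, hrow ⟨k, by omega⟩ hk, ih,
        show Horner m n A ⟨k + 1, by omega⟩ lam = Horner m n A (⟨k, by omega⟩ : Fin m).succ lam
          from rfl, horner_succ, add_mulVec, smul_mulVec]
      simp [add_comm]
  ext ⟨k, j⟩
  rw [hornerBlocks]
  split_ifs with hk
  · rw [show k = 0 from Fin.val_eq_zero_iff.mp hk]
    rfl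
  · have hyk := hFM k k.isLt j
    rwa [FM_last_mulVec, if_neg hk] at hyk

variable {A lam}

theorem C2P_mulVec_secondCompanionLift (hP : IsUnit (PEval m n A lam).det) (x : Fin r → ℂ) :
    C2P m n r A B C D lam *ᵥ secondCompanionLift A lam B x =
      Sum.elim (0 : Fin m × Fin n → ℂ) ((C * (PEval m n A lam)⁻¹ * B + D) *ᵥ x) := by
  have hPw : PEval m n A lam *ᵥ (((PEval m n A lam)⁻¹ * B) *ᵥ x) = B *ᵥ x := by
    rw [mulVec_mulVec, mul_nonsing_inv_cancel_left _ _ hP]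
  change C2P m n r A B C D lam *ᵥ Sum.elim (hornerBlocks A lam _) x = _
  rw [C2P_mulVec_hornerBlocks, hPw, sub_self, add_mulVec, mulVec_mulVec, Matrix.mul_assoc]
  congr
  ext
  simp

theorem ker_C2P_eq_map_secondCompanionLift (hP : IsUnit (PEval m n A lam).det) :
    LinearMap.ker (C2P m n r A B C D lam).mulVecLin =
      (LinearMap.ker (C * (PEval m n A lam)⁻¹ * B + D).mulVecLin).map
        (secondCompanionLift A lam B) := by
  ext v
  simp only [LinearMap.mem_ker, mulVecLin_apply, Submodule.mem_map]
  constructor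
  · intro hv
    obtain ⟨y, x, rfl⟩ : ∃ y x, v = Sum.elim y x := ⟨_, _, (Sum.elim_comp_inl_inr v).symm⟩
    have hy := eq_hornerBlocks_of_C2P_mulVec_eq_zero A lam B C D y x hv
    have hPy : PEval m n A lam *ᵥ Function.curry y 0 = B *ᵥ x := by
      have hlast := hv
      rw [hy, C2P_mulVec_hornerBlocks] at hlast
      ext j
      have hj := congrFun hlast (Sum.inl (⟨m - 1, Nat.sub_one_lt (NeZero.ne m)⟩, j))
      simp only [Sum.elim_inl, Nat.sub_add_cancel NeZero.one_le, if_pos, Pi.sub_apply,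
        Pi.zero_apply, sub_eq_zero] at hj
      exact hj.symm
    have hlift : secondCompanionLift A lam B x = Sum.elim y x := by
      change Sum.elim (hornerBlocks A lam _) x = _
      rw [← mulVec_mulVec, ← hPy, mulVec_mulVec, nonsing_inv_mul _ hP, one_mulVec, ← hy]
    refine ⟨x, ?_, hlift⟩
    rw [← hlift, C2P_mulVec_secondCompanionLift B C D hP] at hv
    exact (Sum.elim_eq_iff.mp (hv.trans Sum.elim_zero_zero.symm)).2
  · rintro ⟨x, hx, rfl⟩
    rw [C2P_mulVec_secondCompanionLift B C D hP, hx, Sum.elim_zero_zero]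

end SecondCompanion

theorem stmt16_general (m n r : ℕ) (hm : 2 ≤ m)
    (A : Fin (m + 1) → Matrix (Fin n) (Fin n) ℂ)
    (B : Matrix (Fin n) (Fin r) ℂ) (C : Matrix (Fin r) (Fin n) ℂ)
    (D : Matrix (Fin r) (Fin r) ℂ)
    (lam : ℂ) (hP : IsUnit (PEval m n A lam).det) :
    (∀ x : Fin r → ℂ,
      (C * (PEval m n A lam)⁻¹ * B + D).mulVec x = 0 ↔
        (C2P m n r A B C D lam).mulVec
          (Sum.elim
            (fun p : Fin m × Fin n =>
              if (p.1 : ℕ) = 0 then ((PEval m n A lam)⁻¹ * B).mulVec x p.2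
              else (Horner m n A p.1.castSucc lam).mulVec
                (((PEval m n A lam)⁻¹ * B).mulVec x) p.2)
            x) = 0) ∧
    ∃ φ : LinearMap.ker (Matrix.mulVecLin (C * (PEval m n A lam)⁻¹ * B + D)) ≃ₗ[ℂ]
        LinearMap.ker (Matrix.mulVecLin (C2P m n r A B C D lam)),
      ∀ x, (φ x : (Fin m × Fin n) ⊕ Fin r → ℂ) =
        Sum.elim
          (fun p : Fin m × Fin n =>
            if (p.1 : ℕ) = 0 then
              ((PEval m n A lam)⁻¹ * B).mulVec (x : Fin r → ℂ) p.2
            else (Horner m n A p.1.castSucc lam).mulVec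
              (((PEval m n A lam)⁻¹ * B).mulVec (x : Fin r → ℂ)) p.2)
          (x : Fin r → ℂ) := by
  have : NeZero m := ⟨by omega⟩
  refine ⟨fun x => ?_, ?_⟩
  · change _ ↔ C2P m n r A B C D lam *ᵥ secondCompanionLift A lam B x = 0
    rw [C2P_mulVec_secondCompanionLift B C D hP, ← Sum.elim_zero_zero, Sum.elim_eq_iff]
    simp
  · exact ⟨(Submodule.equivMapOfInjective _ (secondCompanionLift_injective A lam B) _).trans
      (LinearEquiv.ofEq _ _ (ker_C2P_eq_map_secondCompanionLift B C D hP).symm), fun _ => rfl⟩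

/-- with `w := P(λ)⁻¹ B x` and `v := (w, P_1(λ)w, …, P_{m−1}(λ)w, x)` (Horner
shifts), we have `G(λ)x = 0 ↔ C_2(λ)v = 0`, and `x ↦ v` is a linear isomorphism from the
null space of `G(λ)` onto the null space of the second companion form `C_2(λ)`. -/
theorem stmt16 (m n r : ℕ) (hm : 2 ≤ m) (hn : 1 ≤ n) (hr : 1 ≤ r)
    (A : Fin (m + 1) → Matrix (Fin n) (Fin n) ℂ) (hreg : Regular m n A)
    (B : Matrix (Fin n) (Fin r) ℂ) (C : Matrix (Fin r) (Fin n) ℂ)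
    (D : Matrix (Fin r) (Fin r) ℂ)
    (lam : ℂ) (hP : IsUnit (PEval m n A lam).det) :
    (∀ x : Fin r → ℂ,
      (C * (PEval m n A lam)⁻¹ * B + D).mulVec x = 0 ↔
        (C2P m n r A B C D lam).mulVec
          (Sum.elim
            (fun p : Fin m × Fin n =>
              if (p.1 : ℕ) = 0 then ((PEval m n A lam)⁻¹ * B).mulVec x p.2
              else (Horner m n A p.1.castSucc lam).mulVec
                (((PEval m n A lam)⁻¹ * B).mulVec x) p.2)
            x) = 0) ∧
    ∃ φ : LinearMap.ker (Matrix.mulVecLin (C * (PEval m n A lam)⁻¹ * B + D)) ≃ₗ[ℂ]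
        LinearMap.ker (Matrix.mulVecLin (C2P m n r A B C D lam)),
      ∀ x, (φ x : (Fin m × Fin n) ⊕ Fin r → ℂ) =
        Sum.elim
          (fun p : Fin m × Fin n =>
            if (p.1 : ℕ) = 0 then
              ((PEval m n A lam)⁻¹ * B).mulVec (x : Fin r → ℂ) p.2
            else (Horner m n A p.1.castSucc lam).mulVec
              (((PEval m n A lam)⁻¹ * B).mulVec (x : Fin r → ℂ)) p.2)
          (x : Fin r → ℂ) :=
  stmt16_general m n r hm A B C D lam hP
end
end
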